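/- arXiv:2605.12052 — 3 statements merged into one kernel-verified Lean document; each statement's English description precedes it below -/
import Mathlib

section
/- For any finite set A of integers ≥ 2 and any m, n ∈ ℤ≥0, the set NR_m(A) is finite if and only if NR_n(A) is finite. -/
def Rrep (A : Finset ℕ) (n : ℕ) : Set ℕ :=
  {s | ∃ x : ℕ → ℕ, (∑ a ∈ A, a * x a) = s ∧ n ≤ ∑ a ∈ A, x a}

lemma Rrep_anti (A : Finset ℕ) {m n : ℕ} (h : m ≤ n) : Rrep A n ⊆ Rrep A m := by
  rintro s ⟨x, hx1, hx2⟩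
  exact ⟨x, hx1, h.trans hx2⟩

lemma Rrep_shift (A : Finset ℕ) {a : ℕ} (ha : a ∈ A) {s m : ℕ} (hs : s ∈ Rrep A m) (k : ℕ) :
    s + a * k ∈ Rrep A (m + k) := by
  obtain ⟨x, hx1, hx2⟩ := hs
  refine ⟨Function.update x a (x a + k), ?_, ?_⟩
  · have h1 : ∀ b ∈ A, b * Function.update x a (x a + k) b
        = b * x b + (if b = a then a * k else 0) := by
      intro b _
      by_cases hb : b = a
      · subst hb; simp [Function.update_self, Nat.mul_add]
      · simp [Function.update_of_ne hb, hb]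
    rw [Finset.sum_congr rfl h1, Finset.sum_add_distrib, hx1, Finset.sum_ite_eq' A a fun _ => a * k]
    simp [ha]
  · have h1 : ∀ b ∈ A, Function.update x a (x a + k) b
        = x b + (if b = a then k else 0) := by
      intro b _
      by_cases hb : b = a
      · subst hb; simp [Function.update_self]
      · simp [Function.update_of_ne hb, hb]
    rw [Finset.sum_congr rfl h1, Finset.sum_add_distrib, Finset.sum_ite_eq' A a fun _ => k]
    simp [ha]
    omega

lemma key (A : Finset ℕ) (m n : ℕ) (hf : ((Rrep A m)ᶜ).Finite) : ((Rrep A n)ᶜ).Finite := by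
  rcases A.eq_empty_or_nonempty with rfl | ⟨a, ha⟩
  · exfalso
    refine (Set.Ioi_infinite (0 : ℕ)) (hf.subset ?_)
    intro s hs hmem
    obtain ⟨x, hx1, _⟩ := hmem
    simp at hx1
    simp at hs
    omega
  · have hsub : (Rrep A n)ᶜ ⊆ Set.Iio (a * n) ∪ (fun s => s + a * n) '' (Rrep A m)ᶜ := by
      intro t ht
      by_cases hlt : t < a * n
      · exact Or.inl hlt
      · right
        refine ⟨t - a * n, ?_, by simp; omega⟩
        intro hmem
        have h1 := Rrep_shift A ha hmem n
        have heq : t - a * n + a * n = t := by omega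
        rw [heq] at h1
        exact ht (Rrep_anti A (Nat.le_add_left n m) h1)
    exact ((Set.finite_Iio _).union (hf.image _)).subset hsub

theorem stmt2 (A : Finset ℕ) (hA : ∀ a ∈ A, 2 ≤ a) (m n : ℕ) :
    ((Rrep A m)ᶜ).Finite ↔ ((Rrep A n)ᶜ).Finite :=
  ⟨key A m n, key A n m⟩
end

section
/- For any finite set A of integers ≥ 2 and any n ∈ ℤ≥0, the set NR_n(A) is finite if and only if gcd(A) = 1. -/
lemma bezout_finset (A : Finset ℕ) :
    ∃ c : ℕ → ℤ, ∑ a ∈ A, (a : ℤ) * c a = ((A.gcd id : ℕ) : ℤ) := by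
  classical
  induction A using Finset.induction_on with
  | empty => exact ⟨0, by simp⟩
  | @insert a s ha ih =>
    obtain ⟨c, hc⟩ := ih
    set g : ℕ := s.gcd id with hg
    refine ⟨fun x => if x = a then Nat.gcdA a g else Nat.gcdB a g * c x, ?_⟩
    rw [Finset.sum_insert ha, Finset.gcd_insert]
    have h1 : ∑ x ∈ s, (x : ℤ) * (if x = a then Nat.gcdA a g else Nat.gcdB a g * c x)
        = Nat.gcdB a g * ∑ x ∈ s, (x : ℤ) * c x := by
      rw [Finset.mul_sum]
      refine Finset.sum_congr rfl fun x hx => ?_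
      have : x ≠ a := fun h => ha (h ▸ hx)
      simp [this]; ring
    rw [h1, hc]
    beta_reduce
    rw [if_pos rfl]
    simp only [id_eq]
    rw [show gcd a g = Nat.gcd a g from rfl]
    have := Nat.gcd_eq_gcd_ab a g
    push_cast
    linarith [this]

theorem stmt3 (A : Finset ℕ) (hA : ∀ a ∈ A, 2 ≤ a) (n : ℕ) :
    ((Rrep A n)ᶜ).Finite ↔ A.gcd id = 1 := by
  classical
  constructor
  · -- finite complement → gcd = 1
    intro hfin
    by_contra hg
    -- every element of Rrep is divisible by d = gcd
    set d := A.gcd id with hd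
    have hdvd : ∀ s ∈ Rrep A n, d ∣ s := by
      rintro s ⟨x, hx, -⟩
      rw [← hx]
      exact Finset.dvd_sum fun a ha => Dvd.dvd.mul_right (Finset.gcd_dvd ha) _
    rcases Nat.eq_zero_or_pos d with hd0 | hdpos
    · -- d = 0 : all positive numbers are in the complement
      have : Set.Infinite ((Rrep A n)ᶜ) := by
        apply Set.infinite_of_injective_forall_mem (f := fun k : ℕ => k + 1)
        · intro i j h; simp only at h; omega
        · intro k hk
          have := hdvd _ hk
          rw [hd0] at this
          simp at this
      exact this hfin
    · have hd2 : 2 ≤ d := by omega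
      have : Set.Infinite ((Rrep A n)ᶜ) := by
        apply Set.infinite_of_injective_forall_mem (f := fun k : ℕ => d * k + 1)
        · intro i j h; simp only at h; exact Nat.eq_of_mul_eq_mul_left hdpos (by omega)
        · intro k hk
          have := hdvd _ hk
          obtain ⟨m, hm⟩ := this
          rcases Nat.lt_or_ge m (k + 1) with h | h
          · nlinarith
          · nlinarith
      exact this hfin
  · -- gcd = 1 → finite complement
    intro hg
    have hne : A.Nonempty := by
      rcases A.eq_empty_or_nonempty with h | h
      · rw [h] at hg; simp at hg
      · exact h
    obtain ⟨a, haA⟩ := hne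
    obtain ⟨c, hc⟩ := bezout_finset A
    rw [hg] at hc; push_cast at hc
    set P := ∑ b ∈ A, b * (c b).toNat with hP
    set N := ∑ b ∈ A, b * (-(c b)).toNat with hN
    have hPN : P = N + 1 := by
      have : (P : ℤ) - (N : ℤ) = 1 := by
        rw [hP, hN]
        push_cast
        rw [← Finset.sum_sub_distrib, ← hc]
        refine Finset.sum_congr rfl fun b _ => ?_
        have := Int.toNat_sub_toNat_neg (c b)
        nlinarith [this]
      omega
    -- representability (with no count condition)
    have repP : ∃ x : ℕ → ℕ, ∑ b ∈ A, b * x b = P := ⟨fun b => (c b).toNat, rfl⟩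
    have repN : ∃ x : ℕ → ℕ, ∑ b ∈ A, b * x b = N := ⟨fun b => (-(c b)).toNat, rfl⟩
    obtain ⟨xP, hxP⟩ := repP
    obtain ⟨xN, hxN⟩ := repN
    -- all m ≥ N*N are representable
    have key : ∀ m, N * N ≤ m → ∃ x : ℕ → ℕ, ∑ b ∈ A, b * x b = m := by
      intro m hm
      rcases Nat.eq_zero_or_pos N with h0 | hNpos
      · -- N = 0, P = 1
        refine ⟨fun b => m * xP b, ?_⟩
        have : ∑ b ∈ A, b * (m * xP b) = m * ∑ b ∈ A, b * xP b := by
          rw [Finset.mul_sum]; refine Finset.sum_congr rfl fun b _ => by ring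
        rw [this, hxP, hPN, h0]; ring
      · set q := m / N with hq
        set r := m % N with hr
        have hdm : q * N + r = m := by rw [hq, hr]; exact Nat.div_add_mod' m N
        have hrN : r < N := Nat.mod_lt _ hNpos
        have hqN : N ≤ q := by
          rw [hq]
          exact Nat.le_div_iff_mul_le hNpos |>.mpr (by nlinarith)
        refine ⟨fun b => (q - r) * xN b + r * xP b, ?_⟩
        have : ∑ b ∈ A, b * ((q - r) * xN b + r * xP b)
            = (q - r) * ∑ b ∈ A, b * xN b + r * ∑ b ∈ A, b * xP b := by
          rw [Finset.mul_sum, Finset.mul_sum, ← Finset.sum_add_distrib]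
          refine Finset.sum_congr rfl fun b _ => by ring
        rw [this, hxN, hxP, hPN]
        have hrq : r ≤ q := le_trans (le_of_lt hrN) hqN
        have h2 : (q - r) * N + r * (N + 1) = q * N + r := by
          nlinarith [Nat.sub_add_cancel hrq]
        rw [h2]; exact hdm
    -- now handle the count condition by padding with n copies of a
    apply Set.Finite.subset (Set.finite_Iio (N * N + a * n))
    intro m hm
    simp only [Set.mem_Iio]
    by_contra hge
    push_neg at hge
    apply hm
    obtain ⟨x, hx⟩ := key (m - a * n) (by omega)
    refine ⟨fun b => x b + (if b = a then n else 0), ?_, ?_⟩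
    · have : ∑ b ∈ A, b * (x b + if b = a then n else 0)
          = ∑ b ∈ A, b * x b + ∑ b ∈ A, (if b = a then b * n else 0) := by
        rw [← Finset.sum_add_distrib]
        refine Finset.sum_congr rfl fun b _ => by split <;> ring
      rw [this, hx, Finset.sum_ite_eq' A a (fun b => b * n), if_pos haA]
      omega
    · calc n = ∑ b ∈ A, (if b = a then n else 0) := by
            rw [Finset.sum_ite_eq' A a (fun _ => n), if_pos haA]
        _ ≤ ∑ b ∈ A, (x b + if b = a then n else 0) :=
            Finset.sum_le_sum fun b _ => by omega
end

section
/- NR_2({3, 5}) = NR_2({3, 5, 7}) = {0, 1, 2, 3, 4, 5, 7}. -/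
lemma rep35 : ∀ n : ℕ, 6 ≤ n → n ≠ 7 → ∃ x y : ℕ, 3 * x + 5 * y = n ∧ 2 ≤ x + y := by
  intro n
  induction n using Nat.strong_induction_on with
  | _ n ih =>
    intro h6 h7
    by_cases h : n ≤ 10
    · interval_cases n
      · exact ⟨2, 0, by omega⟩
      · omega
      · exact ⟨1, 1, by omega⟩
      · exact ⟨3, 0, by omega⟩
      · exact ⟨0, 2, by omega⟩
    · obtain ⟨x, y, hxy, hs⟩ := ih (n - 3) (by omega) (by omega) (by omega)
      exact ⟨x + 1, y, by omega, by omega⟩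

theorem stmt6 :
    {a : ℕ | ¬ ∃ x y : ℕ, 3 * x + 5 * y = a ∧ 2 ≤ x + y}
        = ({0, 1, 2, 3, 4, 5, 7} : Set ℕ) ∧
      {a : ℕ | ¬ ∃ x y z : ℕ, 3 * x + 5 * y + 7 * z = a ∧ 2 ≤ x + y + z}
        = ({0, 1, 2, 3, 4, 5, 7} : Set ℕ) := by
  constructor
  · ext a
    simp only [Set.mem_setOf_eq, Set.mem_insert_iff, Set.mem_singleton_iff]
    constructor
    · intro h
      by_contra hc
      exact h (rep35 a (by omega) (by omega))
    · rintro ha ⟨x, y, h1, h2⟩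
      omega
  · ext a
    simp only [Set.mem_setOf_eq, Set.mem_insert_iff, Set.mem_singleton_iff]
    constructor
    · intro h
      by_contra hc
      obtain ⟨x, y, h1, h2⟩ := rep35 a (by omega) (by omega)
      exact h ⟨x, y, 0, by omega, by omega⟩
    · rintro ha ⟨x, y, z, h1, h2⟩
      omega
end
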